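/- arXiv:2402.08033 — 5 statements merged into one kernel-verified Lean document; each statement's English description precedes it below -/
import Mathlib

section
/- For 0 < α < 1, the sequence A_n/(n a_n) converges to 1/(1-α) as n → ∞, and moreover |A_n/(n a_n) − 1/(1-α)| is asymptotically equivalent to 1/((1-α)Γ(α) n^{1-α}). -/
/-!
Telescoping, via Γ(k + 1)/Γ(k + α) - Γ(k)/Γ(k - 1 + α) = (1 - α) Γ(k)/Γ(k + α), puts `A n`
in closed form, and then `A n / (n a n) - 1/(1 - α) = -Γ(n + α) / ((1 - α) Γ(α) Γ(n + 1))`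
exactly. Both claims follow from Wendel's limit `Γ(n + α) ~ n ^ α Γ(n)`, which is a
rearrangement of Euler's limit formula `GammaSeq α n → Γ(α)`.
-/

open Real Finset Filter

namespace Real

lemma prod_range_add_natCast_eq_Gamma_div {s : ℝ} (hs : 0 < s) (n : ℕ) :
    ∏ j ∈ range n, (s + j) = Gamma (s + n) / Gamma s := by
  induction n with
  | zero => simp [(Gamma_pos_of_pos hs).ne']
  | succ n ih =>
    rw [prod_range_succ, ih, Nat.cast_succ, ← add_assoc,
      Gamma_add_one (by positivity : 0 < s + n).ne']
    ring

lemma GammaSeq_div_Gamma_eq {s : ℝ} (hs : 0 < s) {n : ℕ} (hn : n ≠ 0) :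
    GammaSeq s n / Gamma s = n / (n + s) * ((n : ℝ) ^ s * Gamma n / Gamma (n + s)) := by
  have hn' : (0 : ℝ) < n := by positivity
  have := (Gamma_pos_of_pos hs).ne'
  have := (Gamma_pos_of_pos (add_pos hn' hs)).ne'
  rw [GammaSeq, prod_range_add_natCast_eq_Gamma_div hs, ← Gamma_nat_eq_factorial,
    Gamma_add_one hn'.ne', Nat.cast_succ, ← add_assoc, add_comm s,
    Gamma_add_one (by positivity : 0 < (n : ℝ) + s).ne']
  field_simp

theorem tendsto_Gamma_natCast_add_div_rpow_mul_Gamma {s : ℝ} (hs : 0 < s) :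
    Tendsto (fun n : ℕ => Gamma (n + s) / ((n : ℝ) ^ s * Gamma n)) atTop (nhds 1) := by
  have hSeq : Tendsto (fun n => GammaSeq s n / Gamma s) atTop (nhds 1) := by
    simpa [(Gamma_pos_of_pos hs).ne'] using (GammaSeq_tendsto_Gamma s).div_const (Gamma s)
  have h := (tendsto_natCast_div_add_atTop s).div hSeq one_ne_zero
  rw [div_one] at h
  refine h.congr' ?_
  filter_upwards [eventually_ne_atTop 0] with n hn
  have hn' : (0 : ℝ) < n := by positivity
  have := (Gamma_pos_of_pos hn').ne'
  have := (Gamma_pos_of_pos (add_pos hn' hs)).ne'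
  rw [Pi.div_apply, GammaSeq_div_Gamma_eq hs hn]
  field_simp

end Real

lemma one_sub_mul_sum_Icc_Gamma_div_Gamma_add {α : ℝ} (hα : 0 < α) (n : ℕ) :
    (1 - α) * ∑ k ∈ Icc 1 n, Gamma k / Gamma (k + α) =
      Gamma (n + 1) / Gamma (n + α) - 1 / Gamma α := by
  induction n with
  | zero => simp
  | succ n ih =>
    have := (Gamma_pos_of_pos (by positivity : 0 < (n : ℝ) + α)).ne'
    have := (Gamma_pos_of_pos (by positivity : 0 < (n : ℝ) + 1)).ne'
    rw [sum_Icc_succ_top (Nat.le_add_left 1 n), mul_add, ih, Nat.cast_succ, add_right_comm,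
      Gamma_add_one (by positivity : 0 < (n : ℝ) + α).ne',
      Gamma_add_one (by positivity : 0 < (n : ℝ) + 1).ne']
    field_simp
    ring

lemma sum_Icc_Gamma_ratio_div_mul_sub_eq {α : ℝ} (hα0 : 0 < α) (hα1 : α ≠ 1) {n : ℕ}
    (hn : n ≠ 0) :
    (∑ k ∈ Icc 1 n, Gamma k * Gamma (α + 1) / Gamma (k + α)) /
        (n * (Gamma n * Gamma (α + 1) / Gamma (n + α))) - 1 / (1 - α) =
      -(Gamma (n + α) / ((n : ℝ) ^ α * Gamma n)) *
        (1 / ((1 - α) * Gamma α * (n : ℝ) ^ (1 - α))) := by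
  have hn' : (0 : ℝ) < n := by positivity
  have h1α : 1 - α ≠ 0 := sub_ne_zero.mpr hα1.symm
  have := (Gamma_pos_of_pos hα0).ne'
  have := (Gamma_pos_of_pos (by positivity : 0 < α + 1)).ne'
  have := (Gamma_pos_of_pos hn').ne'
  have := (Gamma_pos_of_pos (by positivity : 0 < (n : ℝ) + α)).ne'
  have := (rpow_pos_of_pos hn' α).ne'
  have hsum : ∑ k ∈ Icc 1 n, Gamma k * Gamma (α + 1) / Gamma (k + α) =
      Gamma (α + 1) * ((Gamma (n + 1) / Gamma (n + α) - 1 / Gamma α) / (1 - α)) := by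
    rw [← one_sub_mul_sum_Icc_Gamma_div_Gamma_add hα0, mul_div_cancel_left₀ _ h1α, mul_sum]
    exact sum_congr rfl fun k _ => by ring
  rw [hsum, Gamma_add_one hn'.ne', rpow_sub hn', rpow_one]
  field_simp
  ring

theorem lrrw_An_ratio_asymptotics (α : ℝ) (hα0 : 0 < α) (hα1 : α < 1)
    (a : ℕ → ℝ)
    (ha : ∀ k : ℕ, a k = Real.Gamma k * Real.Gamma (α + 1) / Real.Gamma ((k : ℝ) + α))
    (A : ℕ → ℝ) (hA : ∀ n : ℕ, A n = ∑ k ∈ Finset.Icc 1 n, a k) :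
    Tendsto (fun n : ℕ => A n / ((n : ℝ) * a n)) atTop (nhds (1 / (1 - α))) ∧
    Tendsto (fun n : ℕ =>
        |A n / ((n : ℝ) * a n) - 1 / (1 - α)| /
          (1 / ((1 - α) * Real.Gamma α * (n : ℝ) ^ (1 - α)))) atTop (nhds 1) := by
  set r : ℕ → ℝ := fun n => Gamma (n + α) / ((n : ℝ) ^ α * Gamma n)
  set c : ℕ → ℝ := fun n => 1 / ((1 - α) * Gamma α * (n : ℝ) ^ (1 - α))
  have hr : Tendsto r atTop (nhds 1) := tendsto_Gamma_natCast_add_div_rpow_mul_Gamma hα0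
  have h1α : 0 < 1 - α := sub_pos.mpr hα1
  have hK : 0 < (1 - α) * Gamma α := mul_pos h1α (Gamma_pos_of_pos hα0)
  have hc : Tendsto c atTop (nhds 0) := by
    simpa only [c, one_div, Function.comp_def] using tendsto_inv_atTop_zero.comp <|
      ((tendsto_rpow_atTop h1α).comp tendsto_natCast_atTop_atTop).const_mul_atTop hK
  have hdiff : ∀ᶠ n in atTop, A n / (n * a n) - 1 / (1 - α) = -r n * c n := by
    filter_upwards [eventually_ne_atTop 0] with n hn
    simp only [hA, ha]
    exact sum_Icc_Gamma_ratio_div_mul_sub_eq hα0 hα1.ne hn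
  constructor
  · have h := ((hr.neg.mul hc).congr' (hdiff.mono fun n h => h.symm)).add_const (1 / (1 - α))
    simpa using h
  · refine hr.congr' ?_
    filter_upwards [hdiff, eventually_ne_atTop 0] with n h hn
    have hc_pos : 0 < c n := by positivity
    rw [h, abs_mul, abs_neg, abs_of_pos hc_pos, abs_of_nonneg (by positivity),
      mul_div_cancel_right₀ _ hc_pos.ne']
end

section
/- For 0 < α < 1, the sequence n^α · a_n converges to Γ(1+α) as n → ∞, where a_n = Γ(n)Γ(α+1)/Γ(n+α). -/
/-!
Euler's limit formula `Γ(s) = lim n ^ s * n! / (s (s + 1) ⋯ (s + n))`, rewritten with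
`s (s + 1) ⋯ (s + n - 1) = Γ(s + n) / Γ(s)`, says exactly that `n ^ s * Γ(n) / Γ(n + s) → 1`;
multiplying by `Γ(α + 1)` gives the theorem.
-/

open Real Filter

namespace Real

theorem Gamma_add_nat_eq_mul_prod {s : ℝ} (hs : ∀ m : ℕ, s ≠ -m) (n : ℕ) :
    Gamma (s + n) = Gamma s * ∏ j ∈ Finset.range n, (s + j) := by
  induction n with
  | zero => simp
  | succ n ih =>
    have hsn : s + n ≠ 0 := fun h => hs n (by linarith)
    rw [Nat.cast_succ, ← add_assoc, Gamma_add_one hsn, ih, Finset.prod_range_succ]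
    ring

theorem GammaSeq_eq_rpow_mul_Gamma_div {s : ℝ} (hs : ∀ m : ℕ, s ≠ -m) (n : ℕ) :
    GammaSeq s n = (n : ℝ) ^ s * Gamma (n + 1) * Gamma s / Gamma (s + n + 1) := by
  have hsn : s + n ≠ 0 := fun h => hs n (by linarith)
  have hΓ : Gamma s ≠ 0 := Gamma_ne_zero hs
  rw [GammaSeq, Gamma_nat_eq_factorial, Gamma_add_one hsn, Gamma_add_nat_eq_mul_prod hs,
    Finset.prod_range_succ]
  field_simp

theorem tendsto_rpow_mul_Gamma_div_Gamma_add {s : ℝ} (hs : ∀ m : ℕ, s ≠ -m) :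
    Tendsto (fun n : ℕ => (n : ℝ) ^ s * Gamma n / Gamma (n + s)) atTop (nhds 1) := by
  have hΓ : Gamma s ≠ 0 := Gamma_ne_zero hs
  have hratio : Tendsto (fun n : ℕ => ((n : ℝ) + s) / n) atTop (nhds 1) := by
    simpa using (tendsto_natCast_div_add_atTop s).inv₀ one_ne_zero
  have hlim := ((GammaSeq_tendsto_Gamma s).div_const (Gamma s)).mul hratio
  rw [div_self hΓ, one_mul] at hlim
  refine hlim.congr' ?_
  filter_upwards [eventually_ne_atTop 0] with n hn
  have hn' : (n : ℝ) ≠ 0 := Nat.cast_ne_zero.mpr hn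
  have hns : (n : ℝ) + s ≠ 0 := fun h => hs n (by linarith)
  rw [GammaSeq_eq_rpow_mul_Gamma_div hs, add_comm s, Gamma_add_one hns, Gamma_add_one hn']
  field_simp

end Real

theorem lrrw_an_stirling_general (α : ℝ) (hα0 : 0 < α)
    (a : ℕ → ℝ)
    (ha : ∀ k : ℕ, a k = Real.Gamma k * Real.Gamma (α + 1) / Real.Gamma ((k : ℝ) + α)) :
    Tendsto (fun n : ℕ => (n : ℝ) ^ α * a n) atTop (nhds (Real.Gamma (1 + α))) := by
  have hα : ∀ m : ℕ, α ≠ -m := fun m h => by linarith [(Nat.cast_nonneg m : (0 : ℝ) ≤ m)]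
  have hlim := (tendsto_rpow_mul_Gamma_div_Gamma_add hα).mul_const (Gamma (1 + α))
  rw [one_mul] at hlim
  refine hlim.congr fun n => ?_
  rw [ha, add_comm α 1]
  ring

theorem lrrw_an_stirling (α : ℝ) (hα0 : 0 < α) (hα1 : α < 1)
    (a : ℕ → ℝ)
    (ha : ∀ k : ℕ, a k = Real.Gamma k * Real.Gamma (α + 1) / Real.Gamma ((k : ℝ) + α)) :
    Tendsto (fun n : ℕ => (n : ℝ) ^ α * a n) atTop (nhds (Real.Gamma (1 + α))) :=
  lrrw_an_stirling_general α hα0 a ha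
end

section
/- If α = 1/2, then with a_k = Γ(k)Γ(3/2)/Γ(k+1/2) and v_n = Σ_{k=1}^n a_k^2, the ratio v_n / log n converges to π/4 as n → ∞. -/
/-! Squaring the Gamma ratio turns it into Wallis' partial product: `a (k+1)^2 = W k / (2k+1)`.
Wallis' bounds `(2k+1)/(2k+2) · π/2 ≤ W k ≤ π/2` pin `a (k+1)^2` between `π/(4(k+1))` and that
plus a telescoping term, so `v n = (π/4) H_n + O(1) = (π/4) log n + O(1)`. -/

open Real Finset Filter Asymptotics Topology

theorem tendsto_div_of_sub_mul_isBigO_one {α : Type*} {l : Filter α} {f g : α → ℝ} {c : ℝ}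
    (hg : Tendsto g l atTop) (h : (fun x => f x - c * g x) =O[l] fun _ => (1 : ℝ)) :
    Tendsto (fun x => f x / g x) l (𝓝 c) := by
  have hinv : Tendsto (fun x => (g x)⁻¹) l (𝓝 0) := tendsto_inv_atTop_zero.comp hg
  have herr : Tendsto (fun x => (f x - c * g x) * (g x)⁻¹) l (𝓝 0) :=
    (h.mul (isBigO_refl _ l)).trans_tendsto (by simpa using hinv)
  refine tendsto_sub_nhds_zero_iff.mp (herr.congr' ?_)
  filter_upwards [hg.eventually_ne_atTop 0] with x hx
  field_simp

noncomputable def gammaRatio (k : ℕ) : ℝ := Gamma k * Gamma (3 / 2) / Gamma (k + 1 / 2)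

theorem gammaRatio_one : gammaRatio 1 = 1 := by
  rw [gammaRatio, Nat.cast_one, Gamma_one, one_mul, show (1 : ℝ) + 1 / 2 = 3 / 2 by norm_num,
    div_self (Gamma_pos_of_pos (by norm_num)).ne']

theorem gammaRatio_succ_succ (k : ℕ) :
    gammaRatio (k + 2) = gammaRatio (k + 1) * ((k + 1) / (k + 3 / 2)) := by
  have h : ((k + 2 : ℕ) : ℝ) + 1 / 2 = (k + 1 : ℕ) + 1 / 2 + 1 := by push_cast; ring
  rw [gammaRatio, gammaRatio, h, Gamma_add_one (by positivity), Nat.cast_succ (k + 1),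
    Gamma_add_one (by positivity)]
  have := (Gamma_pos_of_pos (show (0 : ℝ) < (k + 1 : ℕ) + 1 / 2 by positivity)).ne'
  push_cast
  field_simp
  ring

theorem gammaRatio_succ_sq (k : ℕ) : gammaRatio (k + 1) ^ 2 = Wallis.W k / (2 * k + 1) := by
  induction k with
  | zero => simp [gammaRatio_one, Wallis.W]
  | succ k ih =>
    rw [gammaRatio_succ_succ, mul_pow, ih, Wallis.W_succ]
    push_cast
    field_simp
    ring

theorem pi_div_four_div_le_gammaRatio_succ_sq (k : ℕ) :
    π / 4 / (k + 1) ≤ gammaRatio (k + 1) ^ 2 := by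
  rw [gammaRatio_succ_sq]
  calc π / 4 / (k + 1) = (2 * k + 1) / (2 * k + 2) * (π / 2) / (2 * k + 1) := by
        field_simp; ring
    _ ≤ Wallis.W k / (2 * k + 1) := by gcongr; exact Wallis.le_W k

theorem gammaRatio_succ_sq_le (k : ℕ) :
    gammaRatio (k + 1) ^ 2 ≤ π / 4 / (k + 1) + (π / 2 / (k + 1) - π / 2 / (k + 2)) := by
  rw [gammaRatio_succ_sq]
  calc Wallis.W k / (2 * k + 1) ≤ π / 2 / (2 * k + 1) := by gcongr; exact Wallis.W_le k
    _ = π / 4 / (k + 1) + π / 4 / ((k + 1) * (2 * k + 1)) := by field_simp; ring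
    _ ≤ π / 4 / (k + 1) + π / 2 / ((k + 1) * (k + 2)) := by
        gcongr π / 4 / (k + 1) + ?_
        rw [div_le_div_iff₀ (by positivity) (by positivity)]
        have hk : (0 : ℝ) ≤ π * k * (k + 1) := by positivity
        nlinarith
    _ = π / 4 / (k + 1) + (π / 2 / (k + 1) - π / 2 / (k + 2)) := by field_simp; ring

theorem sum_Icc_gammaRatio_sq_sub_harmonic_mem (n : ℕ) :
    ∑ k ∈ Icc 1 n, gammaRatio k ^ 2 - π / 4 * harmonic n ∈ Set.Icc 0 (π / 2) := by
  have hsum : ∑ k ∈ Icc 1 n, gammaRatio k ^ 2 = ∑ k ∈ range n, gammaRatio (k + 1) ^ 2 := by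
    rw [← Finset.Ico_add_one_right_eq_Icc, Finset.sum_Ico_eq_sum_range]
    simp only [Nat.add_sub_cancel, add_comm 1]
  have hharm : π / 4 * (harmonic n : ℝ) = ∑ k ∈ range n, π / 4 / (k + 1) := by
    simp [harmonic, Finset.mul_sum, div_eq_mul_inv]
  have htele : ∑ k ∈ range n, (π / 2 / (k + 1) - π / 2 / ((k + 1 : ℕ) + 1)) ≤ π / 2 := by
    rw [Finset.sum_range_sub']
    norm_num
    positivity
  rw [hsum, hharm, Set.mem_Icc, sub_nonneg, sub_le_iff_le_add']
  constructor
  · exact sum_le_sum fun k _ => pi_div_four_div_le_gammaRatio_succ_sq k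
  · calc ∑ k ∈ range n, gammaRatio (k + 1) ^ 2
        ≤ ∑ k ∈ range n, (π / 4 / (k + 1) + (π / 2 / (k + 1) - π / 2 / ((k + 1 : ℕ) + 1))) :=
          sum_le_sum fun k _ => by push_cast; exact (gammaRatio_succ_sq_le k).trans_eq (by ring)
      _ ≤ _ := by rw [sum_add_distrib]; gcongr

theorem lrrw_vn_critical
    (a : ℕ → ℝ)
    (ha : ∀ k : ℕ, a k = Real.Gamma k * Real.Gamma (3 / 2) / Real.Gamma ((k : ℝ) + 1 / 2))
    (v : ℕ → ℝ) (hv : ∀ n : ℕ, v n = ∑ k ∈ Finset.Icc 1 n, (a k) ^ 2) :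
    Tendsto (fun n : ℕ => v n / Real.log n) atTop (nhds (Real.pi / 4)) := by
  obtain rfl : a = gammaRatio := funext ha
  refine tendsto_div_of_sub_mul_isBigO_one
    (tendsto_log_atTop.comp tendsto_natCast_atTop_atTop) ?_
  have hbounded : (fun n => v n - π / 4 * harmonic n) =O[atTop] fun _ => (1 : ℝ) :=
    IsBigO.of_bound (π / 2) <| Eventually.of_forall fun n => by
      obtain ⟨h0, h1⟩ := hv n ▸ sum_Icc_gammaRatio_sq_sub_harmonic_mem n
      rw [norm_one, mul_one, Real.norm_of_nonneg h0]
      exact h1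
  have hharm := (tendsto_harmonic_sub_log.isBigO_one ℝ).const_mul_left (π / 4)
  refine (hbounded.add hharm).congr_left fun n => ?_
  ring
end

section
/- For the LRRW with α < 1/2, the strong law of large numbers holds: S_n/n converges almost surely to ω/(1−α). -/
/-!
Write `w = (1 - θ)(p - q)` and `α = θ(p - q)`. The transition probabilities give
`E[X_{n+1} | 𝓕_n] = w + α S_n / n`, so `S_{n+1} = (1 + α/n) S_n + w + D_n` with bounded
martingale differences `D_n`. Because `∑ 1/(n+α)² < ∞`, the martingale `∑ D_k/(k+α)` is bounded
in L² and converges almost surely. Along such a path, multiplying `S_n/n - w/(1-α)` by the weight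
`W_n = ∏_{k<n} (k+2)/(k+1+α)` turns the recursion into a partial sum of `W_k D_k/(k+α)`; as
`α < 1`, `W_n` increases to infinity and Kronecker's lemma gives `S_n/n → w/(1-α)`.
-/

open MeasureTheory ProbabilityTheory Filter Real Finset Topology

theorem tendsto_sum_sub_mul_div_of_tendsto_zero {b t : ℕ → ℝ} (hb : ∀ n, 0 < b n)
    (hmono : Monotone b) (htop : Tendsto b atTop atTop) (ht : Tendsto t atTop (𝓝 0)) :
    Tendsto (fun n => (∑ k ∈ range n, (b (k + 1) - b k) * t k) / b n) atTop (𝓝 0) := by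
  have hinc : ∀ k, 0 ≤ b (k + 1) - b k := fun k => sub_nonneg.2 (hmono k.le_succ)
  have hsmall : (fun k => (b (k + 1) - b k) * t k) =o[atTop] fun k => b (k + 1) - b k := by
    simpa only [mul_one] using (Asymptotics.isBigO_refl (fun k => b (k + 1) - b k) atTop)
      |>.mul_isLittleO ((Asymptotics.isLittleO_one_iff ℝ).2 ht)
  have htel : ∀ n, ∑ k ∈ range n, (b (k + 1) - b k) = b n - b 0 := sum_range_sub b
  have hsum := hsmall.sum_range hinc <|
    (tendsto_atTop_add_const_right atTop (-b 0) htop).congr fun n => by rw [htel]; ring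
  simp only [htel] at hsum
  refine (hsum.trans_isBigO (Asymptotics.isBigO_iff.2 ⟨1, Eventually.of_forall fun n => ?_⟩))
    |>.tendsto_div_nhds_zero
  rw [one_mul, norm_of_nonneg (sub_nonneg.2 (hmono n.zero_le)), norm_of_nonneg (hb n).le]
  linarith [hb 0]

theorem tendsto_sum_mul_div_of_tendsto_sum {b y : ℕ → ℝ} {l : ℝ} (hb : ∀ n, 0 < b n)
    (hmono : Monotone b) (htop : Tendsto b atTop atTop)
    (hy : Tendsto (fun n => ∑ k ∈ range n, y k) atTop (𝓝 l)) :
    Tendsto (fun n => (∑ k ∈ range n, b k * y k) / b n) atTop (𝓝 0) := by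
  set t : ℕ → ℝ := fun n => ∑ k ∈ range n, y k - l with ht_def
  have ht : Tendsto t atTop (𝓝 0) := by simpa using hy.sub_const l
  -- summation by parts
  have hparts : ∀ n, ∑ k ∈ range n, b k * y k
      = b n * t n - b 0 * t 0 - ∑ k ∈ range n, (b (k + 1) - b k) * t (k + 1) := by
    intro n
    induction n with
    | zero => simp
    | succ n ih => simp only [sum_range_succ, ih, ht_def]; ring
  have hlim := (ht.sub (tendsto_const_nhds (x := b 0 * t 0) |>.div_atTop htop)).sub
    (tendsto_sum_sub_mul_div_of_tendsto_zero hb hmono htop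
      (ht.comp (tendsto_add_atTop_nat 1)))
  rw [sub_zero, sub_zero] at hlim
  refine hlim.congr fun n => ?_
  rw [hparts, Function.comp_def]
  field_simp [(hb n).ne']

/-- Equals `(m + 1) / P m`, where `P m = ∏_{k<m} (1 + α/(k+1))` solves the homogeneous
recursion `P (m + 1) = (1 + α/(m+1)) P m`. -/
noncomputable def normalizingWeight (α : ℝ) (m : ℕ) : ℝ := ∏ k ∈ range m, (k + 2) / (k + 1 + α)

section normalizingWeight

variable {α : ℝ}

lemma normalizingWeight_succ (m : ℕ) :
    normalizingWeight α (m + 1) = normalizingWeight α m * ((m + 2) / (m + 1 + α)) :=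
  prod_range_succ _ _

lemma normalizingWeight_pos (hα : -1 < α) (m : ℕ) : 0 < normalizingWeight α m :=
  prod_pos fun k _ => div_pos (by positivity) (by linarith [k.cast_nonneg (α := ℝ)])

lemma monotone_normalizingWeight (hα₀ : -1 < α) (hα₁ : α ≤ 1) :
    Monotone (normalizingWeight α) := by
  refine monotone_nat_of_le_succ fun m => ?_
  have hm : (0 : ℝ) < m + 1 + α := by linarith [m.cast_nonneg (α := ℝ)]
  rw [normalizingWeight_succ]
  exact le_mul_of_one_le_right (normalizingWeight_pos hα₀ m).le
    ((one_le_div hm).2 (by linarith))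

lemma one_add_sum_le_normalizingWeight (hα₀ : -1 < α) (hα₁ : α ≤ 1) (m : ℕ) :
    1 + (1 - α) / 2 * ∑ k ∈ range m, 1 / ((k : ℝ) + 1) ≤ normalizingWeight α m := by
  induction m with
  | zero => simp [normalizingWeight]
  | succ m ih =>
    have hW : 1 ≤ normalizingWeight α m := by
      simpa [normalizingWeight] using monotone_normalizingWeight hα₀ hα₁ m.zero_le
    have hm : (0 : ℝ) < m + 1 + α := by linarith [m.cast_nonneg (α := ℝ)]
    have hstep : (1 - α) / 2 * (1 / ((m : ℝ) + 1)) ≤ (1 - α) / (m + 1 + α) := by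
      rw [div_mul_div_comm, mul_one]
      exact div_le_div_of_nonneg_left (by linarith) hm (by linarith)
    calc 1 + (1 - α) / 2 * ∑ k ∈ range (m + 1), 1 / ((k : ℝ) + 1)
        ≤ normalizingWeight α m + (1 - α) / (m + 1 + α) := by
          rw [sum_range_succ, mul_add]; linarith
      _ ≤ normalizingWeight α m + normalizingWeight α m * ((1 - α) / (m + 1 + α)) := by
          gcongr; exact le_mul_of_one_le_left (div_nonneg (by linarith) hm.le) hW
      _ = normalizingWeight α (m + 1) := by
          rw [normalizingWeight_succ]; field_simp; ring

lemma tendsto_normalizingWeight_atTop (hα₀ : -1 < α) (hα₁ : α < 1) :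
    Tendsto (normalizingWeight α) atTop atTop :=
  tendsto_atTop_mono (one_add_sum_le_normalizingWeight hα₀ hα₁.le) <|
    tendsto_atTop_add_const_left _ 1 <|
      tendsto_sum_range_one_div_nat_succ_atTop.const_mul_atTop (by linarith)

end normalizingWeight

theorem tendsto_div_of_recursion {α w l : ℝ} (hα₀ : -1 < α) (hα₁ : α < 1) {u e : ℕ → ℝ}
    (hrec : ∀ m : ℕ, u (m + 1) = (1 + α / (m + 1)) * u m + w + e m)
    (he : Tendsto (fun m => ∑ k ∈ range m, ((k : ℝ) + 1 + α)⁻¹ * e k) atTop (𝓝 l)) :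
    Tendsto (fun m : ℕ => u m / (m + 1)) atTop (𝓝 (w / (1 - α))) := by
  set z : ℕ → ℝ := fun m => u m / (m + 1) - w / (1 - α) with hz_def
  have hz : ∀ m, normalizingWeight α m * z m
      = z 0 + ∑ k ∈ range m, normalizingWeight α k * (((k : ℝ) + 1 + α)⁻¹ * e k) := by
    intro m
    induction m with
    | zero => simp [normalizingWeight]
    | succ m ih =>
      have hm : (m : ℝ) + 1 + α ≠ 0 := by linarith [m.cast_nonneg (α := ℝ)]
      have h1α : 1 - α ≠ 0 := by linarith
      rw [sum_range_succ, ← add_assoc, ← ih, normalizingWeight_succ]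
      simp only [hz_def, hrec]
      push_cast
      field_simp
      ring
  have hlim : Tendsto z atTop (𝓝 0) := by
    have := (tendsto_const_nhds (x := z 0)).div_atTop (tendsto_normalizingWeight_atTop hα₀ hα₁)
      |>.add (tendsto_sum_mul_div_of_tendsto_sum (normalizingWeight_pos hα₀)
        (monotone_normalizingWeight hα₀ hα₁.le) (tendsto_normalizingWeight_atTop hα₀ hα₁) he)
    rw [add_zero] at this
    refine this.congr fun m => ?_
    rw [← add_div, ← hz, mul_div_cancel_left₀ _ (normalizingWeight_pos hα₀ m).ne']
  simpa [hz_def] using hlim.add_const (w / (1 - α))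

section Martingale

variable {Ω : Type*} {m0 : MeasurableSpace Ω} {μ : Measure Ω} [IsFiniteMeasure μ]

lemma integral_mul_eq_zero_of_condExp_eq_zero {m : MeasurableSpace Ω} (hm : m ≤ m0)
    {f g : Ω → ℝ} (hf : StronglyMeasurable[m] f) (hfg : Integrable (f * g) μ)
    (hg : Integrable g μ) (hg0 : μ[g|m] =ᵐ[μ] 0) : ∫ ω, f ω * g ω ∂μ = 0 := by
  have hfg0 : μ[f * g|m] =ᵐ[μ] 0 := by
    filter_upwards [condExp_mul_of_stronglyMeasurable_left hf hfg hg, hg0] with ω h h0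
    simp [h, h0]
  calc ∫ ω, f ω * g ω ∂μ = ∫ ω, (μ[f * g|m]) ω ∂μ := (integral_condExp hm).symm
    _ = 0 := by simp [integral_congr_ae hfg0]

lemma eLpNorm_one_le_of_integral_sq_le {f : Ω → ℝ} {K : ℝ} (hf : MemLp f 2 μ)
    (hK : ∫ ω, f ω ^ 2 ∂μ ≤ K) :
    eLpNorm f 1 μ ≤ ENNReal.ofReal ((K + μ.real Set.univ) / 2) := by
  have hf1 : Integrable f μ := hf.integrable one_le_two
  rw [eLpNorm_one_eq_lintegral_enorm, ← ofReal_integral_norm_eq_lintegral_enorm hf1]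
  refine ENNReal.ofReal_le_ofReal ?_
  calc ∫ ω, ‖f ω‖ ∂μ ≤ ∫ ω, (f ω ^ 2 + 1) / 2 ∂μ := by
        refine integral_mono hf1.norm ((hf.integrable_sq.add (integrable_const 1)).div_const 2)
          fun ω => ?_
        -- `|x| ≤ (x² + 1) / 2` is AM-GM
        nlinarith [sq_nonneg (|f ω| - 1), sq_abs (f ω), Real.norm_eq_abs (f ω)]
    _ = (∫ ω, f ω ^ 2 ∂μ + μ.real Set.univ) / 2 := by
        rw [integral_div, integral_add hf.integrable_sq (integrable_const 1), integral_const,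
          smul_eq_mul, mul_one]
    _ ≤ (K + μ.real Set.univ) / 2 := by gcongr

variable (ℱ : Filtration ℕ m0) {d : ℕ → Ω → ℝ} {c : ℕ → ℝ} {C : ℝ}

lemma stronglyMeasurable_sum_mul (hmeas : ∀ n, StronglyMeasurable[ℱ (n + 1)] (d n)) (n : ℕ) :
    StronglyMeasurable[ℱ n] fun ω => ∑ k ∈ range n, c k * d k ω :=
  Finset.stronglyMeasurable_fun_sum _ fun k hk =>
    ((hmeas k).mono (ℱ.mono (mem_range.1 hk))).const_mul _

lemma memLp_sum_mul (hmeas : ∀ n, StronglyMeasurable[ℱ (n + 1)] (d n))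
    (hbdd : ∀ n ω, |d n ω| ≤ C) (p : ENNReal) (n : ℕ) :
    MemLp (fun ω => ∑ k ∈ range n, c k * d k ω) p μ :=
  memLp_finsetSum _ fun k _ =>
    (MemLp.of_bound ((hmeas k).mono (ℱ.le _)).aestronglyMeasurable C
      (Eventually.of_forall (hbdd k))).const_mul _

theorem martingale_sum_mul (hmeas : ∀ n, StronglyMeasurable[ℱ (n + 1)] (d n))
    (hbdd : ∀ n ω, |d n ω| ≤ C) (hcond : ∀ n, μ[d n|ℱ n] =ᵐ[μ] 0) :
    Martingale (fun n ω => ∑ k ∈ range n, c k * d k ω) ℱ μ := by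
  refine martingale_of_condExp_sub_eq_zero_nat (stronglyMeasurable_sum_mul ℱ hmeas)
    (fun n => (memLp_sum_mul ℱ hmeas hbdd 1 n).integrable le_rfl) fun n => ?_
  have hstep : (fun ω => ∑ k ∈ range (n + 1), c k * d k ω) - (fun ω => ∑ k ∈ range n, c k * d k ω)
      = c n • d n := by
    ext ω; simp [sum_range_succ]
  rw [hstep]
  filter_upwards [condExp_smul (c n) (d n) (ℱ n), hcond n] with ω h h0
  simp [h, h0]

theorem integral_sq_sum_mul_le (hmeas : ∀ n, StronglyMeasurable[ℱ (n + 1)] (d n))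
    (hbdd : ∀ n ω, |d n ω| ≤ C) (hcond : ∀ n, μ[d n|ℱ n] =ᵐ[μ] 0) (n : ℕ) :
    ∫ ω, (∑ k ∈ range n, c k * d k ω) ^ 2 ∂μ
      ≤ C ^ 2 * μ.real Set.univ * ∑ k ∈ range n, c k ^ 2 := by
  induction n with
  | zero => simp
  | succ n ih =>
    set Q : Ω → ℝ := fun ω => ∑ k ∈ range n, c k * d k ω
    have hd : MemLp (d n) 2 μ := MemLp.of_bound ((hmeas n).mono (ℱ.le _)).aestronglyMeasurable C
      (Eventually.of_forall (hbdd n))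
    have hQ2 : MemLp Q 2 μ := memLp_sum_mul ℱ hmeas hbdd 2 n
    have hQd : Integrable (fun ω => Q ω * d n ω) μ :=
      (hQ2.integrable one_le_two).mul_bdd hd.aestronglyMeasurable (Eventually.of_forall (hbdd n))
    have horth : ∫ ω, Q ω * d n ω ∂μ = 0 :=
      integral_mul_eq_zero_of_condExp_eq_zero (ℱ.le n) (stronglyMeasurable_sum_mul ℱ hmeas n) hQd
        (hd.integrable one_le_two) (hcond n)
    have hd2 : ∫ ω, d n ω ^ 2 ∂μ ≤ C ^ 2 * μ.real Set.univ := by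
      rw [mul_comm, ← smul_eq_mul, ← integral_const]
      exact integral_mono hd.integrable_sq (integrable_const _) fun ω =>
        sq_abs (d n ω) ▸ pow_le_pow_left₀ (abs_nonneg _) (hbdd n ω) 2
    calc ∫ ω, (∑ k ∈ range (n + 1), c k * d k ω) ^ 2 ∂μ
        = ∫ ω, Q ω ^ 2 ∂μ + 2 * c n * ∫ ω, Q ω * d n ω ∂μ + c n ^ 2 * ∫ ω, d n ω ^ 2 ∂μ := by
          have hexp : ∀ ω, (∑ k ∈ range (n + 1), c k * d k ω) ^ 2
              = Q ω ^ 2 + 2 * c n * (Q ω * d n ω) + c n ^ 2 * d n ω ^ 2 := fun ω => by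
            rw [sum_range_succ]; ring
          simp_rw [hexp]
          rw [integral_add, integral_add, integral_const_mul, integral_const_mul]
          exacts [hQ2.integrable_sq, hQd.const_mul _, hQ2.integrable_sq.add (hQd.const_mul _),
            hd.integrable_sq.const_mul _]
      _ ≤ C ^ 2 * μ.real Set.univ * ∑ k ∈ range n, c k ^ 2
          + c n ^ 2 * (C ^ 2 * μ.real Set.univ) := by
          rw [horth, mul_zero, add_zero]
          gcongr
      _ = C ^ 2 * μ.real Set.univ * ∑ k ∈ range (n + 1), c k ^ 2 := by
          rw [sum_range_succ]; ring

theorem ae_exists_tendsto_sum_mul_of_condExp_eq_zero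
    (hmeas : ∀ n, StronglyMeasurable[ℱ (n + 1)] (d n)) (hbdd : ∀ n ω, |d n ω| ≤ C)
    (hcond : ∀ n, μ[d n|ℱ n] =ᵐ[μ] 0) (hc : Summable fun n => c n ^ 2) :
    ∀ᵐ ω ∂μ, ∃ l, Tendsto (fun n => ∑ k ∈ range n, c k * d k ω) atTop (𝓝 l) := by
  refine (martingale_sum_mul ℱ hmeas hbdd hcond).submartingale.exists_ae_tendsto_of_bdd
    (R := ((C ^ 2 * μ.real Set.univ * ∑' k, c k ^ 2 + μ.real Set.univ) / 2).toNNReal) fun n => ?_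
  refine eLpNorm_one_le_of_integral_sq_le (memLp_sum_mul ℱ hmeas hbdd 2 n) <|
    (integral_sq_sum_mul_le ℱ hmeas hbdd hcond n).trans ?_
  gcongr
  exact hc.sum_le_tsum _ fun k _ => sq_nonneg (c k)

end Martingale

def MeasureTheory.Filtration.shift {Ω : Type*} {m0 : MeasurableSpace Ω} (ℱ : Filtration ℕ m0)
    (j : ℕ) : Filtration ℕ m0 where
  seq n := ℱ (n + j)
  mono' _ _ h := ℱ.mono (by omega)
  le' n := ℱ.le (n + j)

section RandomWalk

variable {Ω : Type*} {m0 : MeasurableSpace Ω} {μ : Measure Ω} [IsFiniteMeasure μ]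

lemma condExp_sub_eq_zero_of_condExp_eq {m : MeasurableSpace Ω} (hm : m ≤ m0) {Y g : Ω → ℝ}
    (hY : Integrable Y μ) (hg : Integrable g μ) (hgm : StronglyMeasurable[m] g)
    (hYg : μ[Y|m] =ᵐ[μ] g) : μ[Y - g|m] =ᵐ[μ] 0 := by
  filter_upwards [condExp_sub hY hg m, hYg] with ω h h'
  simp [h, h', condExp_of_stronglyMeasurable hm hgm hg]

lemma condExp_eq_condExp_indicator_sub_condExp_indicator {m : MeasurableSpace Ω} {Y : Ω → ℝ}
    (hY : StronglyMeasurable[m0] Y) (hval : ∀ ω, Y ω = 1 ∨ Y ω = -1 ∨ Y ω = 0) :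
    μ[Y|m] =ᵐ[μ] μ[{ω | Y ω = 1}.indicator (fun _ => (1 : ℝ))|m]
      - μ[{ω | Y ω = -1}.indicator (fun _ => (1 : ℝ))|m] := by
  have hind : ∀ y : ℝ, Integrable ({ω | Y ω = y}.indicator (fun _ => (1 : ℝ))) μ := fun y =>
    (integrable_const 1).indicator (hY.measurable (measurableSet_singleton y))
  have hsplit : Y = {ω | Y ω = 1}.indicator (fun _ => (1 : ℝ))
      - {ω | Y ω = -1}.indicator (fun _ => (1 : ℝ)) := by
    ext ω
    rcases hval ω with h | h | h <;> norm_num [Set.indicator_apply, h]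
  conv_lhs => rw [hsplit]
  exact condExp_sub (hind 1) (hind (-1)) m

lemma sum_ite_eq_one_sub_sum_ite_eq_neg_one {ι : Type*} (s : Finset ι) {x : ι → ℝ}
    (hx : ∀ i, x i = 1 ∨ x i = -1 ∨ x i = 0) :
    ∑ i ∈ s, (if x i = 1 then (1 : ℝ) else 0) - ∑ i ∈ s, (if x i = -1 then (1 : ℝ) else 0)
      = ∑ i ∈ s, x i := by
  rw [← sum_sub_distrib]
  refine sum_congr rfl fun i _ => ?_
  rcases hx i with h | h | h <;> norm_num [h]

theorem lrrw_condExp_succ_eq {m : MeasurableSpace Ω} {p q θ : ℝ} {X S Np Nm : ℕ → Ω → ℝ} {n : ℕ}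
    (hXmeas : StronglyMeasurable[m0] (X (n + 1)))
    (hXval : ∀ j ω, X j ω = 1 ∨ X j ω = -1 ∨ X j ω = 0)
    (hS : ∀ j ω, S j ω = ∑ k ∈ Finset.Icc 1 j, X k ω)
    (hNp : ∀ j ω, Np j ω = ∑ k ∈ Finset.Icc 1 j, if X k ω = 1 then (1 : ℝ) else 0)
    (hNm : ∀ j ω, Nm j ω = ∑ k ∈ Finset.Icc 1 j, if X k ω = -1 then (1 : ℝ) else 0)
    (hcond1 : μ[Set.indicator {ω | X (n + 1) ω = 1} (fun _ => (1 : ℝ)) | m]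
        =ᵐ[μ] fun ω => (1 - θ) * p + θ * (p * Np n ω + q * Nm n ω) / n)
    (hcond2 : μ[Set.indicator {ω | X (n + 1) ω = -1} (fun _ => (1 : ℝ)) | m]
        =ᵐ[μ] fun ω => (1 - θ) * q + θ * (q * Np n ω + p * Nm n ω) / n) :
    μ[X (n + 1)|m] =ᵐ[μ] fun ω => (1 - θ) * (p - q) + θ * (p - q) / n * S n ω := by
  filter_upwards [condExp_eq_condExp_indicator_sub_condExp_indicator hXmeas (hXval (n + 1)),
    hcond1, hcond2] with ω h h1 h2
  have hcount : Np n ω - Nm n ω = S n ω := by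
    rw [hNp, hNm, hS, sum_ite_eq_one_sub_sum_ite_eq_neg_one _ fun k => hXval k ω]
  rw [h, Pi.sub_apply, h1, h2, ← hcount]
  ring

theorem ae_exists_tendsto_sum_innovation (ℱ : Filtration ℕ m0) {X S : ℕ → Ω → ℝ} {w α : ℝ}
    (hα : -1 < α) (hX : StronglyAdapted ℱ X) (hXbdd : ∀ n ω, |X n ω| ≤ 1)
    (hS : ∀ n ω, S n ω = ∑ k ∈ Finset.Icc 1 n, X k ω)
    (hdrift : ∀ n, 1 ≤ n → μ[X (n + 1)|ℱ n] =ᵐ[μ] fun ω => w + α / n * S n ω) :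
    ∀ᵐ ω ∂μ, ∃ l, Tendsto (fun m => ∑ k ∈ range m,
      ((k : ℝ) + 1 + α)⁻¹ * (X (k + 2) ω - (w + α / ↑(k + 1) * S (k + 1) ω))) atTop (𝓝 l) := by
  have hSmeas : ∀ n, StronglyMeasurable[ℱ n] (S n) := fun n => by
    rw [show S n = fun ω => ∑ k ∈ Finset.Icc 1 n, X k ω from funext (hS n)]
    exact Finset.stronglyMeasurable_fun_sum _ fun k hk =>
      (hX k).mono (ℱ.mono (Finset.mem_Icc.1 hk).2)
  have hSbdd : ∀ n ω, |S n ω| ≤ n := fun n ω => by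
    rw [hS]
    refine (abs_sum_le_sum_abs _ _).trans ?_
    simpa using sum_le_card_nsmul (Finset.Icc 1 n) _ 1 fun k _ => hXbdd k ω
  set g : ℕ → Ω → ℝ := fun n ω => w + α / n * S n ω
  have hgbdd : ∀ n ω, |g n ω| ≤ |w| + |α| := fun n ω => by
    refine (abs_add_le _ _).trans (add_le_add_right ?_ _)
    rcases n.eq_zero_or_pos with rfl | hn
    · simp
    · rw [abs_mul, abs_div, Nat.abs_cast]
      calc |α| / n * |S n ω| ≤ |α| / n * n := by gcongr; exact hSbdd n ω
        _ = |α| := div_mul_cancel₀ _ (by positivity)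
  have hgmeas : ∀ n, StronglyMeasurable[ℱ n] (g n) := fun n =>
    stronglyMeasurable_const.add ((hSmeas n).const_mul _)
  have hintegrable : ∀ {n} {f : Ω → ℝ} (C : ℝ), StronglyMeasurable[ℱ n] f → (∀ ω, |f ω| ≤ C) →
      Integrable f μ := fun C hf hC =>
    Integrable.of_bound (hf.mono (ℱ.le _)).aestronglyMeasurable C (Eventually.of_forall hC)
  refine ae_exists_tendsto_sum_mul_of_condExp_eq_zero (ℱ.shift 1)
    (d := fun k => X (k + 2) - g (k + 1))
    (C := 1 + (|w| + |α|)) (fun k => (hX (k + 2)).sub ((hgmeas (k + 1)).mono (ℱ.mono (by omega))))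
    (fun k ω => (abs_sub _ _).trans (add_le_add (hXbdd _ ω) (hgbdd _ ω)))
    (fun k => condExp_sub_eq_zero_of_condExp_eq (ℱ.le _) (hintegrable 1 (hX _) (hXbdd _))
      (hintegrable _ (hgmeas _) (hgbdd _)) (hgmeas _) (hdrift (k + 1) (by omega)))
    (((summable_one_div_nat_add_rpow (1 + α) 2).2 one_lt_two).congr fun k => ?_)
  have hk : (0 : ℝ) < k + (1 + α) := by linarith [k.cast_nonneg (α := ℝ)]
  rw [abs_of_pos hk, rpow_two, one_div, inv_pow, add_assoc]

end RandomWalk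

theorem lrrw_slln_diffusive_general
    {Ω : Type*} [MeasurableSpace Ω] (μ : Measure Ω) [IsProbabilityMeasure μ]
    (p q r θ : ℝ) (hp : 0 ≤ p) (hr : 0 ≤ r) (hpqr : p + q + r = 1)
    (hθ0 : 0 ≤ θ) (hθ1 : θ < 1)
    (X : ℕ → Ω → ℝ) (hXmeas : ∀ n, StronglyMeasurable (X n))
    (hXval : ∀ n ω, X n ω = 1 ∨ X n ω = -1 ∨ X n ω = 0)
    (S : ℕ → Ω → ℝ) (hS : ∀ n ω, S n ω = ∑ k ∈ Finset.Icc 1 n, X k ω)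
    (Np Nm : ℕ → Ω → ℝ)
    (hNp : ∀ n ω, Np n ω = ∑ k ∈ Finset.Icc 1 n, if X k ω = 1 then (1 : ℝ) else 0)
    (hNm : ∀ n ω, Nm n ω = ∑ k ∈ Finset.Icc 1 n, if X k ω = -1 then (1 : ℝ) else 0)
    (hcond1 : ∀ n : ℕ, 1 ≤ n →
      μ[Set.indicator {ω | X (n + 1) ω = 1} (fun _ => (1 : ℝ)) |
          (MeasureTheory.Filtration.natural X hXmeas) n]
        =ᵐ[μ] fun ω => (1 - θ) * p + θ * (p * Np n ω + q * Nm n ω) / n)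
    (hcond2 : ∀ n : ℕ, 1 ≤ n →
      μ[Set.indicator {ω | X (n + 1) ω = -1} (fun _ => (1 : ℝ)) |
          (MeasureTheory.Filtration.natural X hXmeas) n]
        =ᵐ[μ] fun ω => (1 - θ) * q + θ * (q * Np n ω + p * Nm n ω) / n)
    (hα : θ * (p - q) < 1 / 2) :
    ∀ᵐ ω ∂μ, Tendsto (fun n : ℕ => S n ω / n) atTop
      (nhds ((p - q) * (1 - θ) / (1 - θ * (p - q)))) := by
  have hα₀ : -1 < θ * (p - q) := by nlinarith
  have hα₁ : θ * (p - q) < 1 := by linarith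
  have hconv := ae_exists_tendsto_sum_innovation (μ := μ) (w := (1 - θ) * (p - q)) _ hα₀
    (Filtration.stronglyAdapted_natural hXmeas)
    (fun n ω => by rcases hXval n ω with h | h | h <;> norm_num [h]) hS
    fun n hn => lrrw_condExp_succ_eq (hXmeas _) hXval hS hNp hNm (hcond1 n hn) (hcond2 n hn)
  filter_upwards [hconv] with ω ⟨l, hl⟩
  have hrec : ∀ m : ℕ, S (m + 1 + 1) ω = (1 + θ * (p - q) / (m + 1)) * S (m + 1) ω
      + (1 - θ) * (p - q)
      + (X (m + 2) ω - ((1 - θ) * (p - q) + θ * (p - q) / ↑(m + 1) * S (m + 1) ω)) := by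
    intro m
    rw [hS, hS, Finset.sum_Icc_succ_top (by omega)]
    push_cast
    ring
  rw [← tendsto_add_atTop_iff_nat 1]
  convert tendsto_div_of_recursion (u := fun m => S (m + 1) ω) hα₀ hα₁ hrec hl using 2
  · push_cast; rfl
  · ring

theorem lrrw_slln_diffusive
    {Ω : Type*} [MeasurableSpace Ω] (μ : Measure Ω) [IsProbabilityMeasure μ]
    (p q r θ : ℝ) (hp : 0 ≤ p) (hq : 0 ≤ q) (hr : 0 ≤ r) (hpqr : p + q + r = 1)
    (hθ0 : 0 ≤ θ) (hθ1 : θ < 1)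
    (X : ℕ → Ω → ℝ) (hXmeas : ∀ n, StronglyMeasurable (X n))
    (hXval : ∀ n ω, X n ω = 1 ∨ X n ω = -1 ∨ X n ω = 0)
    (hX0 : ∀ ω, X 0 ω = 0)
    (S : ℕ → Ω → ℝ) (hS : ∀ n ω, S n ω = ∑ k ∈ Finset.Icc 1 n, X k ω)
    (Np Nm : ℕ → Ω → ℝ)
    (hNp : ∀ n ω, Np n ω = ∑ k ∈ Finset.Icc 1 n, if X k ω = 1 then (1 : ℝ) else 0)
    (hNm : ∀ n ω, Nm n ω = ∑ k ∈ Finset.Icc 1 n, if X k ω = -1 then (1 : ℝ) else 0)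
    (hinit1 : μ {ω | X 1 ω = 1} = ENNReal.ofReal p)
    (hinit2 : μ {ω | X 1 ω = -1} = ENNReal.ofReal q)
    (hcond1 : ∀ n : ℕ, 1 ≤ n →
      μ[Set.indicator {ω | X (n + 1) ω = 1} (fun _ => (1 : ℝ)) |
          (MeasureTheory.Filtration.natural X hXmeas) n]
        =ᵐ[μ] fun ω => (1 - θ) * p + θ * (p * Np n ω + q * Nm n ω) / n)
    (hcond2 : ∀ n : ℕ, 1 ≤ n →
      μ[Set.indicator {ω | X (n + 1) ω = -1} (fun _ => (1 : ℝ)) |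
          (MeasureTheory.Filtration.natural X hXmeas) n]
        =ᵐ[μ] fun ω => (1 - θ) * q + θ * (q * Np n ω + p * Nm n ω) / n)
    (hα : θ * (p - q) < 1 / 2) :
    ∀ᵐ ω ∂μ, Tendsto (fun n : ℕ => S n ω / n) atTop
      (nhds ((p - q) * (1 - θ) / (1 - θ * (p - q)))) :=
  lrrw_slln_diffusive_general μ p q r θ hp hr hpqr hθ0 hθ1 X hXmeas hXval S hS Np Nm hNp hNm hcond1
    hcond2 hα
end

section
/- For the LRRW, E[S_n] = (β + ω(A_n − 1))/a_n for all n ≥ 1, where β = p − q, and consequently E[M_n] = β − ω for all n ≥ 1. -/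
open MeasureTheory ProbabilityTheory Filter Real Finset

/-!
Taking expectations in the conditional laws of the steps gives the linear recursion
`E[S_{n+1}] = (1 + θ(p - q)/n) E[S_n] + (p - q)(1 - θ)`, and `a_n` is chosen so that
`a_n = a_{n+1} (1 + θ(p - q)/n)`. Multiplying the recursion by `a_{n+1}` shows that
`a_n E[S_n] - (p - q)(1 - θ) A_n = E[M_n]` does not depend on `n`; at `n = 1` it equals
`E[X_1] - (p - q)(1 - θ) = (p - q) - (p - q)(1 - θ)`.
-/

lemma mul_sub_mul_sum_Icc_eq_of_linear_rec {a f s : ℕ → ℝ} (w : ℝ)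
    (ha : ∀ n, 1 ≤ n → a n = a (n + 1) * f n) (hs : ∀ n, 1 ≤ n → s (n + 1) = f n * s n + w)
    {n : ℕ} (hn : 1 ≤ n) :
    a n * s n - w * ∑ k ∈ Icc 1 n, a k = a 1 * s 1 - w * a 1 := by
  induction n, hn using Nat.le_induction with
  | base => simp
  | succ n hn ih =>
    rw [sum_Icc_succ_top (by omega), ← ih, hs n hn, ha n hn]
    ring

lemma prod_Icc_inv_eq_prod_Icc_succ_inv_mul {G : Type*} [CommGroupWithZero G] {g : ℕ → G}
    {n : ℕ} (hn : 1 ≤ n) (hg : g n ≠ 0) :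
    ∏ k ∈ Icc 1 (n - 1), (g k)⁻¹ = (∏ k ∈ Icc 1 n, (g k)⁻¹) * g n := by
  obtain ⟨m, rfl⟩ : ∃ m, n = m + 1 := ⟨n - 1, by omega⟩
  rw [prod_Icc_succ_top (by omega), mul_assoc, inv_mul_cancel₀ hg, mul_one, Nat.add_sub_cancel]

lemma one_add_div_natCast_pos {c : ℝ} (hc : -1 < c) {k : ℕ} (hk : 1 ≤ k) :
    0 < 1 + c / k := by
  have hk' : (1 : ℝ) ≤ k := by exact_mod_cast hk
  rw [one_add_div (by positivity)]
  exact div_pos (by linarith) (by linarith)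

lemma ite_eq_one_sub_ite_eq_neg_one {x : ℝ} (hx : x = 1 ∨ x = -1 ∨ x = 0) :
    ((if x = 1 then 1 else 0) - if x = -1 then 1 else 0 : ℝ) = x := by
  rcases hx with rfl | rfl | rfl <;> norm_num

section Ternary

variable {Ω : Type*} {m m0 : MeasurableSpace Ω} {μ : Measure Ω} {f : Ω → ℝ}

lemma eq_indicator_sub_indicator_of_ternary (hf : ∀ ω, f ω = 1 ∨ f ω = -1 ∨ f ω = 0) :
    f = {ω | f ω = 1}.indicator (fun _ => 1) - {ω | f ω = -1}.indicator (fun _ => 1) := by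
  ext ω
  simp only [Pi.sub_apply, Set.indicator_apply, Set.mem_ofPred_eq]
  exact (ite_eq_one_sub_ite_eq_neg_one (hf ω)).symm

lemma integrable_of_ternary [IsFiniteMeasure μ] (hmeas : StronglyMeasurable f)
    (hf : ∀ ω, f ω = 1 ∨ f ω = -1 ∨ f ω = 0) : Integrable f μ := by
  refine .of_bound hmeas.aestronglyMeasurable 1 (.of_forall fun ω => ?_)
  rcases hf ω with h | h | h <;> simp [h]

lemma integrable_finsetSum_of_ternary [IsFiniteMeasure μ] {ι : Type*} (s : Finset ι)
    {X : ι → Ω → ℝ} (hmeas : ∀ i, StronglyMeasurable (X i))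
    (hX : ∀ i ω, X i ω = 1 ∨ X i ω = -1 ∨ X i ω = 0) :
    Integrable (fun ω => ∑ i ∈ s, X i ω) μ :=
  integrable_finsetSum _ fun i _ => integrable_of_ternary (hmeas i) (hX i)

lemma integral_eq_measureReal_sub_of_ternary [IsFiniteMeasure μ] (hmeas : StronglyMeasurable f)
    (hf : ∀ ω, f ω = 1 ∨ f ω = -1 ∨ f ω = 0) :
    ∫ ω, f ω ∂μ = μ.real {ω | f ω = 1} - μ.real {ω | f ω = -1} := by
  have hset : ∀ c : ℝ, MeasurableSet {ω | f ω = c} := fun c =>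
    hmeas.measurable (measurableSet_singleton c)
  have hind : ∀ c : ℝ, Integrable ({ω | f ω = c}.indicator (fun _ => (1 : ℝ))) μ := fun c =>
    (integrable_const 1).indicator (hset c)
  have hdec := integral_congr_ae (μ := μ)
    (.of_forall (congrFun (eq_indicator_sub_indicator_of_ternary hf)))
  simp only [Pi.sub_apply] at hdec
  rw [hdec, integral_sub (hind 1) (hind (-1)), integral_indicator_const _ (hset 1),
    integral_indicator_const _ (hset (-1)), smul_eq_mul, smul_eq_mul, mul_one, mul_one]

lemma measureReal_eq_integral_of_condExp_indicator_ae_eq [IsFiniteMeasure μ] (hm : m ≤ m0)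
    {s : Set Ω} (hs : MeasurableSet[m0] s) {g : Ω → ℝ}
    (h : μ[s.indicator (fun _ => (1 : ℝ)) | m] =ᵐ[μ] g) :
    μ.real s = ∫ ω, g ω ∂μ := by
  rw [← integral_congr_ae h, integral_condExp hm, integral_indicator_const _ hs, smul_eq_mul,
    mul_one]

end Ternary

lemma integral_partialSum_succ_of_condExp_indicator {Ω : Type*} {m m0 : MeasurableSpace Ω}
    {μ : Measure Ω} [IsProbabilityMeasure μ] (hm : m ≤ m0) {p q θ : ℝ}
    {X : ℕ → Ω → ℝ} (hXmeas : ∀ n, StronglyMeasurable (X n))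
    (hXval : ∀ n ω, X n ω = 1 ∨ X n ω = -1 ∨ X n ω = 0)
    {S Np Nm : ℕ → Ω → ℝ} (hS : ∀ n ω, S n ω = ∑ k ∈ Icc 1 n, X k ω)
    (hNp : ∀ n ω, Np n ω = ∑ k ∈ Icc 1 n, if X k ω = 1 then (1 : ℝ) else 0)
    (hNm : ∀ n ω, Nm n ω = ∑ k ∈ Icc 1 n, if X k ω = -1 then (1 : ℝ) else 0) {n : ℕ}
    (hcond1 : μ[Set.indicator {ω | X (n + 1) ω = 1} (fun _ => (1 : ℝ)) | m]
        =ᵐ[μ] fun ω => (1 - θ) * p + θ * (p * Np n ω + q * Nm n ω) / n)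
    (hcond2 : μ[Set.indicator {ω | X (n + 1) ω = -1} (fun _ => (1 : ℝ)) | m]
        =ᵐ[μ] fun ω => (1 - θ) * q + θ * (q * Np n ω + p * Nm n ω) / n) :
    ∫ ω, S (n + 1) ω ∂μ = (1 + θ * (p - q) / n) * ∫ ω, S n ω ∂μ + (p - q) * (1 - θ) := by
  have hSint : Integrable (S n) μ :=
    funext (hS n) ▸ integrable_finsetSum_of_ternary _ hXmeas hXval
  have hNpNm : ∀ ω, Np n ω - Nm n ω = S n ω := fun ω => by
    rw [hNp, hNm, hS, ← sum_sub_distrib]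
    exact sum_congr rfl fun k _ => ite_eq_one_sub_ite_eq_neg_one (hXval k ω)
  have hset : ∀ c : ℝ, MeasurableSet {ω | X (n + 1) ω = c} := fun c =>
    (hXmeas _).measurable (measurableSet_singleton c)
  have hX : ∫ ω, X (n + 1) ω ∂μ = ∫ ω, ((1 - θ) * (p - q) + θ * (p - q) / n * S n ω) ∂μ := by
    rw [integral_eq_measureReal_sub_of_ternary (hXmeas _) (hXval _),
      measureReal_eq_integral_of_condExp_indicator_ae_eq hm (hset 1) hcond1,
      measureReal_eq_integral_of_condExp_indicator_ae_eq hm (hset (-1)) hcond2,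
      ← integral_sub (integrable_condExp.congr hcond1) (integrable_condExp.congr hcond2)]
    refine integral_congr_ae (.of_forall fun ω => ?_)
    simp only [← hNpNm ω]
    ring
  have hS_succ : ∀ ω, S (n + 1) ω = S n ω + X (n + 1) ω := fun ω => by
    rw [hS, hS, sum_Icc_succ_top (by omega)]
  rw [integral_congr_ae (.of_forall hS_succ),
    integral_add hSint (integrable_of_ternary (hXmeas _) (hXval _)), hX,
    integral_add (integrable_const _) (hSint.const_mul _), integral_const, integral_const_mul,
    probReal_univ, one_smul]
  ring

theorem lrrw_mean_Sn_general
    {Ω : Type*} [MeasurableSpace Ω] (μ : Measure Ω) [IsProbabilityMeasure μ]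
    (p q r θ : ℝ) (hp : 0 ≤ p) (hq : 0 ≤ q) (hr : 0 ≤ r) (hpqr : p + q + r = 1)
    (hθ0 : 0 ≤ θ) (hθ1 : θ < 1)
    (X : ℕ → Ω → ℝ) (hXmeas : ∀ n, StronglyMeasurable (X n))
    (hXval : ∀ n ω, X n ω = 1 ∨ X n ω = -1 ∨ X n ω = 0)
    (S : ℕ → Ω → ℝ) (hS : ∀ n ω, S n ω = ∑ k ∈ Finset.Icc 1 n, X k ω)
    (Np Nm : ℕ → Ω → ℝ)
    (hNp : ∀ n ω, Np n ω = ∑ k ∈ Finset.Icc 1 n, if X k ω = 1 then (1 : ℝ) else 0)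
    (hNm : ∀ n ω, Nm n ω = ∑ k ∈ Finset.Icc 1 n, if X k ω = -1 then (1 : ℝ) else 0)
    (hinit1 : μ {ω | X 1 ω = 1} = ENNReal.ofReal p)
    (hinit2 : μ {ω | X 1 ω = -1} = ENNReal.ofReal q)
    (hcond1 : ∀ n : ℕ, 1 ≤ n →
      μ[Set.indicator {ω | X (n + 1) ω = 1} (fun _ => (1 : ℝ)) |
          (MeasureTheory.Filtration.natural X hXmeas) n]
        =ᵐ[μ] fun ω => (1 - θ) * p + θ * (p * Np n ω + q * Nm n ω) / n)
    (hcond2 : ∀ n : ℕ, 1 ≤ n →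
      μ[Set.indicator {ω | X (n + 1) ω = -1} (fun _ => (1 : ℝ)) |
          (MeasureTheory.Filtration.natural X hXmeas) n]
        =ᵐ[μ] fun ω => (1 - θ) * q + θ * (q * Np n ω + p * Nm n ω) / n)
    (a : ℕ → ℝ)
    (ha : ∀ n : ℕ, a n = ∏ k ∈ Finset.Icc 1 (n - 1), (1 + θ * (p - q) / (k : ℝ))⁻¹)
    (A : ℕ → ℝ) (hA : ∀ n : ℕ, A n = ∑ k ∈ Finset.Icc 1 n, a k)
    (M : ℕ → Ω → ℝ)
    (hM : ∀ n ω, M n ω = a n * S n ω - (p - q) * (1 - θ) * A n) :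
    ∀ n : ℕ, 1 ≤ n →
      (∫ ω, S n ω ∂μ = ((p - q) + (p - q) * (1 - θ) * (A n - 1)) / a n) ∧
      ∫ ω, M n ω ∂μ = (p - q) - (p - q) * (1 - θ) := by
  intro n hn
  have hc : -1 < θ * (p - q) := by nlinarith
  have hfac : ∀ k : ℕ, 1 ≤ k → 1 + θ * (p - q) / k ≠ 0 := fun k hk =>
    (one_add_div_natCast_pos hc hk).ne'
  have ha_ne : a n ≠ 0 := by
    rw [ha, prod_ne_zero_iff]
    exact fun k hk => inv_ne_zero (hfac k (mem_Icc.mp hk).1)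
  have ha_rec : ∀ k : ℕ, 1 ≤ k → a k = a (k + 1) * (1 + θ * (p - q) / k) := fun k hk => by
    rw [ha, ha, Nat.add_sub_cancel]
    exact prod_Icc_inv_eq_prod_Icc_succ_inv_mul hk (hfac k hk)
  have hmean_rec : ∀ k : ℕ, 1 ≤ k → ∫ ω, S (k + 1) ω ∂μ
      = (1 + θ * (p - q) / k) * ∫ ω, S k ω ∂μ + (p - q) * (1 - θ) := fun k hk =>
    integral_partialSum_succ_of_condExp_indicator ((Filtration.natural X hXmeas).le k) hXmeas
      hXval hS hNp hNm (hcond1 k hk) (hcond2 k hk)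
  have hmean_one : ∫ ω, S 1 ω ∂μ = p - q := by
    simp only [hS, Icc_self, sum_singleton]
    rw [integral_eq_measureReal_sub_of_ternary (hXmeas 1) (hXval 1), measureReal_def,
      measureReal_def, hinit1, hinit2, ENNReal.toReal_ofReal hp, ENNReal.toReal_ofReal hq]
  have hinv := mul_sub_mul_sum_Icc_eq_of_linear_rec (s := fun k => ∫ ω, S k ω ∂μ) _ ha_rec
    hmean_rec hn
  have hSint : Integrable (S n) μ :=
    funext (hS n) ▸ integrable_finsetSum_of_ternary _ hXmeas hXval
  have ha_one : a 1 = 1 := by simp [ha]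
  rw [hmean_one, ha_one, ← hA] at hinv
  refine ⟨by field_simp; linarith, ?_⟩
  rw [integral_congr_ae (.of_forall (hM n)), integral_sub (hSint.const_mul _) (integrable_const _),
    integral_const_mul, integral_const, probReal_univ, smul_eq_mul, one_mul]
  linarith

theorem lrrw_mean_Sn
    {Ω : Type*} [MeasurableSpace Ω] (μ : Measure Ω) [IsProbabilityMeasure μ]
    (p q r θ : ℝ) (hp : 0 ≤ p) (hq : 0 ≤ q) (hr : 0 ≤ r) (hpqr : p + q + r = 1)
    (hθ0 : 0 ≤ θ) (hθ1 : θ < 1)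
    (X : ℕ → Ω → ℝ) (hXmeas : ∀ n, StronglyMeasurable (X n))
    (hXval : ∀ n ω, X n ω = 1 ∨ X n ω = -1 ∨ X n ω = 0)
    (hX0 : ∀ ω, X 0 ω = 0)
    (S : ℕ → Ω → ℝ) (hS : ∀ n ω, S n ω = ∑ k ∈ Finset.Icc 1 n, X k ω)
    (Np Nm : ℕ → Ω → ℝ)
    (hNp : ∀ n ω, Np n ω = ∑ k ∈ Finset.Icc 1 n, if X k ω = 1 then (1 : ℝ) else 0)
    (hNm : ∀ n ω, Nm n ω = ∑ k ∈ Finset.Icc 1 n, if X k ω = -1 then (1 : ℝ) else 0)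
    (hinit1 : μ {ω | X 1 ω = 1} = ENNReal.ofReal p)
    (hinit2 : μ {ω | X 1 ω = -1} = ENNReal.ofReal q)
    (hcond1 : ∀ n : ℕ, 1 ≤ n →
      μ[Set.indicator {ω | X (n + 1) ω = 1} (fun _ => (1 : ℝ)) |
          (MeasureTheory.Filtration.natural X hXmeas) n]
        =ᵐ[μ] fun ω => (1 - θ) * p + θ * (p * Np n ω + q * Nm n ω) / n)
    (hcond2 : ∀ n : ℕ, 1 ≤ n →
      μ[Set.indicator {ω | X (n + 1) ω = -1} (fun _ => (1 : ℝ)) |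
          (MeasureTheory.Filtration.natural X hXmeas) n]
        =ᵐ[μ] fun ω => (1 - θ) * q + θ * (q * Np n ω + p * Nm n ω) / n)
    (a : ℕ → ℝ)
    (ha : ∀ n : ℕ, a n = ∏ k ∈ Finset.Icc 1 (n - 1), (1 + θ * (p - q) / (k : ℝ))⁻¹)
    (A : ℕ → ℝ) (hA : ∀ n : ℕ, A n = ∑ k ∈ Finset.Icc 1 n, a k)
    (M : ℕ → Ω → ℝ)
    (hM : ∀ n ω, M n ω = a n * S n ω - (p - q) * (1 - θ) * A n) :
    ∀ n : ℕ, 1 ≤ n →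
      (∫ ω, S n ω ∂μ = ((p - q) + (p - q) * (1 - θ) * (A n - 1)) / a n) ∧
      ∫ ω, M n ω ∂μ = (p - q) - (p - q) * (1 - θ) :=
  lrrw_mean_Sn_general μ p q r θ hp hq hr hpqr hθ0 hθ1 X hXmeas hXval S hS Np Nm hNp hNm hinit1
    hinit2 hcond1 hcond2 a ha A hA M hM
end
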